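/- arXiv:2007.07995 — 4 statements merged into one kernel-verified Lean document; each statement's English description precedes it below -/
import Mathlib

section
/- The n-qubit GHZ state can be decomposed as (1/√(2^{n-m})) Σ_{x∈{0,1}^{n-m-1}} (|0⟩^⊗(m+1) + (−1)^{|x|}|1⟩^⊗(m+1)) ⊗ H^⊗(n-m-1)|x⟩, where the first m+1 tensor factors correspond to any fixed subset of m+1 qubits and |x| denotes the Hamming weight of x. -/
/-!
Split the GHZ state by the common value `d ∈ {0, 1}` of its qubits, and the participant factor
`|0…0⟩ + s |1…1⟩` likewise as `∑ d, s ^ d |d…d⟩`. With `s = (-1)^|x|` the sum over `x` then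
becomes, for each `d`, the character sum `∑ₓ (-1)^(d·|x|) H^⊗k |x⟩ = √2^k |d…d⟩`, which factors
into single-qubit sums because `H b c = (-1)^(b c) / √2`.
-/

open Complex Finset

noncomputable section

/-- The n-qubit GHZ state (|0⟩^⊗n + |1⟩^⊗n)/√2, as an amplitude function. -/
def ghz (n : ℕ) : (Fin n → Fin 2) → ℂ :=
  fun x => if (∀ i, x i = 0) ∨ (∀ i, x i = 1) then ((1 / Real.sqrt 2 : ℝ) : ℂ) else 0

/-- The Hadamard gate. -/
def Hmat : Matrix (Fin 2) (Fin 2) ℂ :=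
  ((Real.sqrt 2)⁻¹ : ℝ) • !![1, 1; 1, -1]

/-- Amplitude of the state (|0⟩^⊗k + s·|1⟩^⊗k) (unnormalised GHZ-type state with sign s). -/
def ghzPart (k : ℕ) (s : ℂ) : (Fin k → Fin 2) → ℂ :=
  fun a => if ∀ i, a i = 0 then 1 else if ∀ i, a i = 1 then s else 0

lemma not_forall_eq_and_forall_eq {ι α : Type*} [Nonempty ι] {b c : α} (hbc : b ≠ c)
    (a : ι → α) : ¬ ((∀ i, a i = b) ∧ ∀ i, a i = c) := by
  rintro ⟨hb, hc⟩
  obtain ⟨i⟩ := ‹Nonempty ι›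
  exact hbc ((hb i).symm.trans (hc i))

lemma ghz_eq_sum {n : ℕ} (hn : 0 < n) (y : Fin n → Fin 2) :
    ghz n y = ((1 / Real.sqrt 2 : ℝ) : ℂ) * ∑ d : Fin 2, if ∀ i, y i = d then 1 else 0 := by
  have : Nonempty (Fin n) := ⟨⟨0, hn⟩⟩
  have := not_forall_eq_and_forall_eq (by decide : (0 : Fin 2) ≠ 1) y
  rw [ghz, Fin.sum_univ_two]
  by_cases h0 : ∀ i, y i = 0 <;> by_cases h1 : ∀ i, y i = 1 <;> simp [h0, h1] at this ⊢

lemma ghzPart_eq_sum {k : ℕ} (hk : 0 < k) (s : ℂ) (a : Fin k → Fin 2) :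
    ghzPart k s a = ∑ d : Fin 2, if ∀ i, a i = d then s ^ d.val else 0 := by
  have : Nonempty (Fin k) := ⟨⟨0, hk⟩⟩
  have := not_forall_eq_and_forall_eq (by decide : (0 : Fin 2) ≠ 1) a
  rw [ghzPart, Fin.sum_univ_two]
  by_cases h0 : ∀ i, a i = 0 <;> by_cases h1 : ∀ i, a i = 1 <;> simp [h0, h1] at this ⊢

lemma sum_sign_pow_mul_Hmat (c d : Fin 2) :
    ∑ b : Fin 2, ((-1 : ℂ) ^ b.val) ^ d.val * Hmat c b =
      if c = d then ((Real.sqrt 2 : ℝ) : ℂ) else 0 := by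
  have h2 : ((Real.sqrt 2 : ℝ) : ℂ) ^ 2 = 2 := by
    rw [← Complex.ofReal_pow, Real.sq_sqrt zero_le_two]; norm_num
  have h0 : ((Real.sqrt 2 : ℝ) : ℂ) ≠ 0 := by exact_mod_cast (Real.sqrt_pos.2 two_pos).ne'
  fin_cases c <;> fin_cases d <;>
    simp [Hmat, Fin.sum_univ_two, Matrix.smul_apply, Complex.real_smul] <;>
    field_simp <;> linear_combination -h2

lemma sum_sign_pow_mul_prod_Hmat {ι : Type*} [Fintype ι] [DecidableEq ι] (z : ι → Fin 2)
    (d : Fin 2) :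
    ∑ x : ι → Fin 2, ((-1 : ℂ) ^ ∑ i, (x i).val) ^ d.val * ∏ i, Hmat (z i) (x i) =
      if ∀ i, z i = d then ((Real.sqrt 2 : ℝ) : ℂ) ^ Fintype.card ι else 0 := by
  simp_rw [← prod_pow_eq_pow_sum, ← prod_pow, ← prod_mul_distrib]
  rw [← Fintype.prod_sum (fun i b => ((-1 : ℂ) ^ b.val) ^ d.val * Hmat (z i) b)]
  simp only [sum_sign_pow_mul_Hmat, Fintype.prod_ite_zero, prod_const, card_univ]

lemma one_div_sqrt_pow_succ_mul_sqrt_pow {x : ℝ} (hx : 0 < x) (k : ℕ) :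
    1 / Real.sqrt (x ^ (k + 1)) * Real.sqrt x ^ k = 1 / Real.sqrt x := by
  have hs : Real.sqrt (x ^ (k + 1)) = Real.sqrt x ^ (k + 1) := by
    rw [Real.sqrt_eq_iff_eq_sq (by positivity) (by positivity), ← pow_mul, mul_comm, pow_mul,
      Real.sq_sqrt hx.le]
  have : Real.sqrt x ≠ 0 := (Real.sqrt_pos.2 hx).ne'
  rw [hs, pow_succ]
  field_simp

/-- Decomposition of the n-qubit GHZ state with respect to an arbitrary bipartition
into m+1 participant qubits and n−m−1 non-participant qubits:
GHZ_n = (1/√(2^{n-m})) Σ_{x∈{0,1}^{n-m-1}} (|0⟩^⊗(m+1) + (−1)^{|x|}|1⟩^⊗(m+1)) ⊗ H^⊗(n-m-1)|x⟩. -/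
theorem ghz_decomposition (n m : ℕ) (h : m + 1 ≤ n)
    (e : Fin n ≃ (Fin (m + 1) ⊕ Fin (n - m - 1))) (y : Fin n → Fin 2) :
    ghz n y =
      ((1 / Real.sqrt (2 ^ (n - m)) : ℝ) : ℂ) *
        ∑ x : Fin (n - m - 1) → Fin 2,
          ghzPart (m + 1) ((-1 : ℂ) ^ (∑ i, (x i).val)) (fun a => y (e.symm (Sum.inl a))) *
            ∏ i, Hmat (y (e.symm (Sum.inr i))) (x i) := by
  have hsplit (d : Fin 2) : (∀ j, y j = d) ↔
      (∀ a, y (e.symm (.inl a)) = d) ∧ ∀ i, y (e.symm (.inr i)) = d :=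
    e.forall_congr_left.trans Sum.forall
  have hconst : ((1 / Real.sqrt (2 ^ (n - m)) : ℝ) : ℂ) * ((Real.sqrt 2 : ℝ) : ℂ) ^ (n - m - 1) =
      ((1 / Real.sqrt 2 : ℝ) : ℂ) := by
    rw [show n - m = n - m - 1 + 1 by omega]
    exact_mod_cast one_div_sqrt_pow_succ_mul_sqrt_pow two_pos (n - m - 1)
  calc ghz n y
      = ((1 / Real.sqrt (2 ^ (n - m)) : ℝ) : ℂ) * ∑ d : Fin 2,
          if ∀ a, y (e.symm (.inl a)) = d then
            (if ∀ i, y (e.symm (.inr i)) = d then ((Real.sqrt 2 : ℝ) : ℂ) ^ (n - m - 1) else 0)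
          else 0 := by
        rw [ghz_eq_sum (by omega), ← hconst, mul_assoc, mul_sum]
        simp only [hsplit, ite_and, mul_ite, mul_one, mul_zero]
    _ = _ := by
      simp_rw [ghzPart_eq_sum (Nat.succ_pos m), sum_mul, ite_mul, zero_mul]
      rw [sum_comm]
      simp_rw [sum_ite_irrel, sum_const_zero, sum_sign_pow_mul_prod_Hmat, Fintype.card_fin]
end
end

section
/- Let r : Fin n → Fin n → ZMod 2 be such that each row j ≠ j_a is uniformly distributed over the affine subspace {v : Σ_k v_k = 0}, independently across rows, and row j_a is fixed with Σ_k r_{j_a,k} = c. Then for any k, the column sums z_k = Σ_j r_{j,k}, conditioned on their total Σ_k z_k = c, are uniformly distributed over {z : Σ_k z_k = c}; in particular the joint distribution of (z_1,…,z_n) is independent of the identity j_a of Alice's row. -/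
/-!
Every constraint on a table is affine, so adding a table that meets the constraints for
(Alice's row `b`, column sums `w`) turns tables for `(a, z)` bijectively into tables for
`(a + b, z + w)`, and permuting the rows moves Alice's row anywhere. Such a table exists as
soon as `∑ b = ∑ w` and there is a second row: put `b` in Alice's row and `w - b` in another.
-/

open Finset

variable {ρ κ M : Type*} [Fintype ρ] [Fintype κ] [AddCommGroup M]

def IsNotificationTable (ja : ρ) (a z : κ → M) (r : ρ → κ → M) : Prop :=
  r ja = a ∧ (∀ j, j ≠ ja → ∑ k, r j k = 0) ∧ ∀ k, ∑ j, r j k = z k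

instance [DecidableEq ρ] [DecidableEq M] (ja : ρ) (a z : κ → M) :
    DecidablePred (IsNotificationTable ja a z) :=
  fun _ => inferInstanceAs (Decidable (_ ∧ _))

theorem IsNotificationTable.add_iff {ja : ρ} {a b z w : κ → M} {r t : ρ → κ → M}
    (ht : IsNotificationTable ja b w t) :
    IsNotificationTable ja (a + b) (z + w) (r + t) ↔ IsNotificationTable ja a z r := by
  obtain ⟨ht_row, ht_rows, ht_cols⟩ := ht
  simp only [IsNotificationTable, Pi.add_apply, sum_add_distrib, ht_row, add_left_inj]
  refine and_congr Iff.rfl (and_congr (forall₂_congr fun j hj => ?_) (forall_congr' fun k => ?_))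
  · rw [ht_rows j hj, add_zero]
  · rw [ht_cols k, add_left_inj]

theorem isNotificationTable_comp_perm_iff {ja : ρ} {a z : κ → M} {r : ρ → κ → M}
    (σ : Equiv.Perm ρ) :
    IsNotificationTable ja a z (r ∘ σ) ↔ IsNotificationTable (σ ja) a z r := by
  simp only [IsNotificationTable, Function.comp_apply]
  refine and_congr Iff.rfl (and_congr ?_ (forall_congr' fun k => ?_))
  · exact σ.forall_congr fun {j} => by rw [σ.injective.ne_iff]
  · rw [Equiv.sum_comp σ (fun j => r j k)]

theorem exists_isNotificationTable [DecidableEq ρ] {ja j₀ : ρ} (hj₀ : j₀ ≠ ja)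
    {b w : κ → M} (hbw : ∑ k, b k = ∑ k, w k) : ∃ t, IsNotificationTable ja b w t := by
  refine ⟨Pi.single ja b + Pi.single j₀ (w - b), ?_, fun j hj => ?_, fun k => ?_⟩
  · simp [hj₀.symm]
  · by_cases hjj₀ : j = j₀
    · subst hjj₀; simp [hj, sum_sub_distrib, hbw]
    · simp [hj, hjj₀]
  · simp [Pi.single_apply, ite_apply, sum_add_distrib]

variable [DecidableEq ρ] [DecidableEq κ] [Fintype M] [DecidableEq M]

theorem card_isNotificationTable_perm (σ : Equiv.Perm ρ) (ja : ρ) (a z : κ → M) :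
    #{r | IsNotificationTable (σ ja) a z r} = #{r | IsNotificationTable ja a z r} :=
  card_equiv (σ.symm.arrowCongr (Equiv.refl _)) fun r => by
    simp only [mem_filter, mem_univ, true_and]
    exact (isNotificationTable_comp_perm_iff σ).symm

theorem card_isNotificationTable_add {ja : ρ} {b w : κ → M} {t : ρ → κ → M}
    (ht : IsNotificationTable ja b w t) (a z : κ → M) :
    #{r | IsNotificationTable ja a z r} = #{r | IsNotificationTable ja (a + b) (z + w) r} :=
  card_equiv (Equiv.addRight t) fun r => by simpa using (ht.add_iff (r := r)).symm

theorem card_isNotificationTable_eq [Nontrivial ρ] {ja ja' : ρ} {a a' z z' : κ → M}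
    (haz : ∑ k, a k = ∑ k, z k) (haz' : ∑ k, a' k = ∑ k, z' k) :
    #{r | IsNotificationTable ja a z r} = #{r | IsNotificationTable ja' a' z' r} := by
  obtain ⟨j₀, hj₀⟩ := exists_ne ja'
  obtain ⟨t, ht⟩ := exists_isNotificationTable hj₀ (b := a' - a) (w := z' - z)
    (by simp only [Pi.sub_apply, sum_sub_distrib, haz, haz'])
  calc #{r | IsNotificationTable ja a z r}
      = #{r | IsNotificationTable ja' a z r} := by
        rw [← card_isNotificationTable_perm (Equiv.swap ja ja') ja', Equiv.swap_apply_right]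
    _ = #{r | IsNotificationTable ja' a' z' r} := by
        simpa using card_isNotificationTable_add ht a z

/-- Anonymity of the Notification protocol: rows j ≠ j_a are uniform over the parity-0 affine
subspace (independently), and Alice's row j_a is a fixed vector a with parity c.  Counting the
equally-likely tables r that are compatible with this description, the column-sum vector
z_k = Σ_j r_{j,k} is uniform over {z : Σ_k z_k = c}: every such z arises from the same number
of tables, and this number does not depend on the identity j_a of Alice's row nor on her fixed
row a.  In particular the joint distribution of (z_1,…,z_n) is independent of j_a. -/
theorem notification_anonymity (n : ℕ) (hn : 2 ≤ n) (c : ZMod 2)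
    (ja ja' : Fin n) (a a' : Fin n → ZMod 2)
    (ha : (∑ k, a k) = c) (ha' : (∑ k, a' k) = c)
    (z z' : Fin n → ZMod 2) (hz : (∑ k, z k) = c) (hz' : (∑ k, z' k) = c) :
    ((univ : Finset (Fin n → Fin n → ZMod 2)).filter
        (fun r => r ja = a ∧ (∀ j, j ≠ ja → (∑ k, r j k) = 0) ∧ ∀ k, (∑ j, r j k) = z k)).card
      =
    ((univ : Finset (Fin n → Fin n → ZMod 2)).filter
        (fun r => r ja' = a' ∧ (∀ j, j ≠ ja' → (∑ k, r j k) = 0) ∧ ∀ k, (∑ j, r j k) = z' k)).card := by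
  have : Nontrivial (Fin n) := Fin.nontrivial_iff_two_le.mpr hn
  convert card_isNotificationTable_eq (ja := ja) (ja' := ja') (ha.trans hz.symm)
    (ha'.trans hz'.symm) <;> exact Iff.rfl
end

section
/- Let x₁,…,x_n ∈ ZMod 2 and let S ⊆ {1,…,n} and its complement S̄ partition the indices. If for i ∈ S the x_i are i.i.d. uniform random bits independent of (x_j)_{j∈S̄}, then the joint distribution of the multiset of all announced bits {x_1,…,x_n} reveals no information about S beyond its cardinality: for any two subsets S, S' of equal size and fixed values of the non-participant bits having the same multiset distribution, the distributions of the announced tuple after a uniformly random permutation are equal. -/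
/-!
Label party `i` by `none` if it is a participant and by `some (y i)` otherwise. Given the
participants' bits `x` and the broadcast order `σ`, the announced tuple is
`k ↦ (ℓ (σ k)).getD (x (σ k))`, so it depends on `(S, y)` only through the label function `ℓ`.
Relabelling the parties by a permutation `τ`, i.e. `(x, σ) ↦ (x ∘ τ⁻¹, τ * σ)`, matches the runs
announcing `t` under `ℓ' ∘ τ = ℓ` with those under `ℓ'`. The two hypotheses say exactly that
the label functions of `(S, y)` and `(S', y')` take every value equally often, which is what
makes such a `τ` exist.
-/

open Finset

theorem Equiv.Perm.exists_comp_eq_of_map_univ_eq {ι β : Type*} [Fintype ι] [DecidableEq β]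
    {f g : ι → β} (h : univ.val.map f = univ.val.map g) : ∃ σ : Equiv.Perm ι, g ∘ σ = f := by
  have card_fiber (b : β) : Fintype.card {i // f i = b} = Fintype.card {i // g i = b} := by
    have := congrArg (Multiset.count b) h
    simp only [Multiset.count_map, eq_comm (a := b)] at this
    rwa [Fintype.card_subtype, Fintype.card_subtype]
  exact ⟨.ofFiberEquiv fun b => Fintype.equivOfCardEq (card_fiber b),
    funext (Equiv.ofFiberEquiv_map _)⟩

section Announcement

variable {ι β : Type*} [DecidableEq ι]

def announcementLabel (S : Finset ι) (y : ι → β) (i : ι) : Option β :=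
  if i ∈ S then none else some (y i)

theorem announcementLabel_getD (S : Finset ι) (y : ι → β) (i : ι) (b : β) :
    (announcementLabel S y i).getD b = if i ∈ S then b else y i := by
  unfold announcementLabel
  split_ifs <;> rfl

theorem map_univ_announcementLabel [Fintype ι] (S : Finset ι) (y : ι → β) :
    univ.val.map (announcementLabel S y) = .replicate #S none + (Sᶜ.val.map y).map some := by
  have univ_split : (univ : Finset ι).val = S.val + Sᶜ.val := by
    rw [← S.union_compl, ← disjUnion_eq_union S Sᶜ disjoint_compl_right]
    rfl
  have on_S : ∀ i ∈ S.val, announcementLabel S y i = none := fun i hi => if_pos hi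
  have on_compl : ∀ i ∈ Sᶜ.val, announcementLabel S y i = some (y i) :=
    fun i hi => if_neg (mem_compl.mp hi)
  rw [univ_split, Multiset.map_add, Multiset.map_congr rfl on_S, Multiset.map_congr rfl on_compl,
    Multiset.map_const', card_val, Multiset.map_map]
  rfl

theorem card_announced_eq_of_comp_perm [Fintype ι] [Fintype β] [DecidableEq β]
    (ℓ ℓ' : ι → Option β) (τ : Equiv.Perm ι) (hτ : ℓ' ∘ τ = ℓ) (t : ι → β) :
    #{p : (ι → β) × Equiv.Perm ι | ∀ k, t k = (ℓ (p.2 k)).getD (p.1 (p.2 k))} =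
    #{p : (ι → β) × Equiv.Perm ι | ∀ k, t k = (ℓ' (p.2 k)).getD (p.1 (p.2 k))} := by
  refine card_equiv ((τ.arrowCongr (.refl β)).prodCongr (Equiv.mulLeft τ)) fun p => ?_
  subst hτ
  simp

end Announcement

/-- Anonymity of the broadcast step of the Anonymous Multiparty Entanglement protocol.
Participants (indices in S) announce i.i.d. uniform bits; non-participants announce their
fixed bits (given by y); all bits are broadcast in a uniformly random order.  For any two
participant sets S, S' of equal cardinality whose non-participant bits have the same multiset
of values, every announced tuple t arises from the same number of (equally likely) pairs
(participant bit assignment, permutation); hence the distribution of the announced tuple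
reveals nothing about S beyond its cardinality. -/
theorem announcement_anonymity (n : ℕ) (S S' : Finset (Fin n)) (hcard : S.card = S'.card)
    (y y' : Fin n → ZMod 2)
    (hmult : Multiset.map y Sᶜ.val = Multiset.map y' S'ᶜ.val)
    (t : Fin n → ZMod 2) :
    ((univ : Finset ((Fin n → ZMod 2) × Equiv.Perm (Fin n))).filter
        (fun p => ∀ k, t k = if p.2 k ∈ S then p.1 (p.2 k) else y (p.2 k))).card =
    ((univ : Finset ((Fin n → ZMod 2) × Equiv.Perm (Fin n))).filter
        (fun p => ∀ k, t k = if p.2 k ∈ S' then p.1 (p.2 k) else y' (p.2 k))).card := by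
  have same_labels : univ.val.map (announcementLabel S y) =
      univ.val.map (announcementLabel S' y') := by
    rw [map_univ_announcementLabel, map_univ_announcementLabel, hcard, hmult]
  obtain ⟨τ, hτ⟩ := Equiv.Perm.exists_comp_eq_of_map_univ_eq same_labels
  have := card_announced_eq_of_comp_perm _ _ τ hτ t
  simp only [announcementLabel_getD] at this
  exact this
end

section
/- If a cheating non-participant skips their X-measurement in the Anonymous Multiparty Entanglement protocol (announcing a random bit instead), then after the honest non-participants measure and Alice applies her Z-correction based on the announced parities, the resulting state on the m+2 unmeasured qubits (participants plus cheater) is, up to a Z-correction error known only through the cheater's withheld outcome, the (m+2)-qubit GHZ state; in particular the cheater remains entangled with the participants. -/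
open Complex Finset

noncomputable section

/-- The X-basis vector with outcome bit `b`: (|0⟩ + (−1)^b |1⟩)/√2. -/
def xvec (b : Fin 2) : Fin 2 → ℂ :=
  fun c => ((1 / Real.sqrt 2 : ℝ) : ℂ) * (if b = 1 ∧ c = 1 then -1 else 1)

/-- Normalised GHZ-type state with sign s: (|0⟩^⊗k + s·|1⟩^⊗k)/√2. -/
def ghzSign (k : ℕ) (s : ℂ) : (Fin k → Fin 2) → ℂ :=
  fun a =>
    if ∀ i, a i = 0 then ((1 / Real.sqrt 2 : ℝ) : ℂ)
    else if ∀ i, a i = 1 then s * ((1 / Real.sqrt 2 : ℝ) : ℂ)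
    else 0

/-- Apply a single-qubit gate `A` to the `k`-th qubit. -/
def applyGate {n : ℕ} (A : Matrix (Fin 2) (Fin 2) ℂ) (k : Fin n)
    (ψ : (Fin n → Fin 2) → ℂ) : (Fin n → Fin 2) → ℂ :=
  fun x => ∑ b : Fin 2, A (x k) b * ψ (Function.update x k b)

/-- The Pauli Z gate. -/
def Zmat : Matrix (Fin 2) (Fin 2) ℂ := !![1, 0; 0, -1]

/-- The (unnormalised) state of the m+2 unmeasured qubits (the m+1 participants plus the
cheating non-participant) after the h honest non-participants measure their qubits of
GHZ_{(m+2)+h} in the X-basis with outcome string x. -/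
def postCheat (m h : ℕ) (e : Fin (m + 2 + h) ≃ (Fin (m + 2) ⊕ Fin h))
    (x : Fin h → Fin 2) : (Fin (m + 2) → Fin 2) → ℂ :=
  fun a => ∑ y : Fin h → Fin 2,
    (∏ i, star (xvec (x i) (y i))) * ghz (m + 2 + h) (fun j => Sum.elim a y (e j))

/-! ### Auxiliary lemmas -/

lemma star_xvec (b c : Fin 2) : star (xvec b c) = xvec b c := by
  unfold xvec
  split <;> simp [Complex.ext_iff]

lemma xvec_zero (b : Fin 2) : xvec b 0 = ((1 / Real.sqrt 2 : ℝ) : ℂ) := by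
  unfold xvec; simp

lemma xvec_one (b : Fin 2) : xvec b 1 = ((1 / Real.sqrt 2 : ℝ) : ℂ) * (-1) ^ b.val := by
  unfold xvec; fin_cases b <;> simp

lemma sqrt_pow_aux (h : ℕ) :
    (((1 / Real.sqrt 2 : ℝ) : ℂ)) ^ h = ((1 / Real.sqrt (2 ^ h) : ℝ) : ℂ) := by
  have key : Real.sqrt (2 ^ h) = (Real.sqrt 2) ^ h := by
    rw [← Real.sqrt_sq (by positivity : (0:ℝ) ≤ Real.sqrt 2 ^ h)]
    congr 1
    rw [← pow_mul, mul_comm, pow_mul, Real.sq_sqrt (by norm_num : (0:ℝ) ≤ 2)]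
  rw [key]
  push_cast
  rw [div_pow, one_pow]

lemma sum_elim_all_eq (m h : ℕ) (e : Fin (m + 2 + h) ≃ (Fin (m + 2) ⊕ Fin h))
    (a : Fin (m + 2) → Fin 2) (y : Fin h → Fin 2) (v : Fin 2) :
    (∀ j, Sum.elim a y (e j) = v) ↔ (∀ i, a i = v) ∧ (∀ i, y i = v) := by
  constructor
  · intro H
    constructor
    · intro i; have := H (e.symm (Sum.inl i)); rwa [e.apply_symm_apply] at this
    · intro i; have := H (e.symm (Sum.inr i)); rwa [e.apply_symm_apply] at this
  · rintro ⟨h1, h2⟩ j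
    cases hj : e j with
    | inl i => simp [h1 i]
    | inr i => simp [h2 i]

lemma postCheat_eq (m h : ℕ) (e : Fin (m + 2 + h) ≃ (Fin (m + 2) ⊕ Fin h))
    (x : Fin h → Fin 2) :
    postCheat m h e x
      = ((1 / Real.sqrt (2 ^ h) : ℝ) : ℂ) • ghzSign (m + 2) ((-1) ^ (∑ i, (x i).val)) := by
  funext a
  have hprod0 : (∏ i, star (xvec (x i) ((fun _ => (0 : Fin 2)) i)))
      = ((1 / Real.sqrt (2 ^ h) : ℝ) : ℂ) := by
    simp only [star_xvec]
    simp only [xvec_zero, Finset.prod_const, Finset.card_univ, Fintype.card_fin]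
    exact sqrt_pow_aux h
  have hprod1 : (∏ i, star (xvec (x i) ((fun _ => (1 : Fin 2)) i)))
      = ((1 / Real.sqrt (2 ^ h) : ℝ) : ℂ) * (-1) ^ (∑ i, (x i).val) := by
    simp only [star_xvec]
    simp only [xvec_one]
    rw [Finset.prod_mul_distrib, Finset.prod_const, Finset.card_univ, Fintype.card_fin,
      sqrt_pow_aux h, Finset.prod_pow_eq_pow_sum]
  unfold postCheat ghz
  simp only [sum_elim_all_eq m h e a]
  by_cases ha0 : ∀ i, a i = 0
  · have ha1 : ¬ ∀ i, a i = 1 := fun H => by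
      have := (ha0 0).symm.trans (H 0); exact absurd this (by decide)
    rw [Fintype.sum_eq_single (fun _ => (0 : Fin 2))]
    · have : ((∀ i, a i = 0) ∧ ∀ i : Fin h, (fun _ => (0:Fin 2)) i = 0) ∨
          ((∀ i, a i = 1) ∧ ∀ i : Fin h, (fun _ => (0:Fin 2)) i = 1) := Or.inl ⟨ha0, fun _ => rfl⟩
      rw [if_pos this, hprod0]
      simp only [Pi.smul_apply, smul_eq_mul, ghzSign, if_pos ha0]
    · intro y hy
      have hy0 : ¬ ∀ i, y i = 0 := fun H => hy (funext H)
      by_cases hy1 : ∀ i, y i = 1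
      · rw [if_neg, mul_zero]
        rintro (⟨-, H⟩ | ⟨H, -⟩)
        · exact hy0 H
        · exact ha1 H
      · rw [if_neg, mul_zero]
        rintro (⟨-, H⟩ | ⟨-, H⟩)
        · exact hy0 H
        · exact hy1 H
  · by_cases ha1 : ∀ i, a i = 1
    · rw [Fintype.sum_eq_single (fun _ => (1 : Fin 2))]
      · have : ((∀ i, a i = 0) ∧ ∀ i : Fin h, (fun _ => (1:Fin 2)) i = 0) ∨
            ((∀ i, a i = 1) ∧ ∀ i : Fin h, (fun _ => (1:Fin 2)) i = 1) :=
          Or.inr ⟨ha1, fun _ => rfl⟩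
        rw [if_pos this, hprod1]
        simp only [Pi.smul_apply, smul_eq_mul, ghzSign, if_neg ha0, if_pos ha1]
        ring
      · intro y hy
        have hy1 : ¬ ∀ i, y i = 1 := fun H => hy (funext H)
        rw [if_neg, mul_zero]
        rintro (⟨H, -⟩ | ⟨-, H⟩)
        · exact ha0 H
        · exact hy1 H
    · simp [ghzSign, ha0, ha1]

lemma applyGate_Z {n : ℕ} (k : Fin n) (ψ : (Fin n → Fin 2) → ℂ) :
    applyGate Zmat k ψ = fun a => (if a k = 1 then -1 else 1) * ψ a := by
  funext a
  unfold applyGate Zmat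
  rw [Fin.sum_univ_two]
  have hk : a k = 0 ∨ a k = 1 := (by decide : ∀ b : Fin 2, b = 0 ∨ b = 1) (a k)
  rcases hk with hk | hk
  · have hupd : Function.update a k 0 = a := by rw [← hk]; exact Function.update_eq_self k a
    rw [hk, hupd]
    simp
  · have hupd : Function.update a k 1 = a := by rw [← hk]; exact Function.update_eq_self k a
    rw [hk, hupd]
    simp

lemma applyZ_ghzSign {n : ℕ} (k : Fin n) (w s : ℂ) :
    applyGate Zmat k (w • ghzSign n s) = w • ghzSign n (-s) := by
  rw [applyGate_Z]
  funext a
  simp only [Pi.smul_apply, smul_eq_mul, ghzSign]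
  by_cases h0 : ∀ i, a i = 0
  · rw [if_pos h0, if_pos h0, if_neg (by rw [h0 k]; decide), one_mul]
  · by_cases h1 : ∀ i, a i = 1
    · rw [if_neg h0, if_neg h0, if_pos h1, if_pos h1, if_pos (h1 k)]
      ring
    · simp [h0, h1]

lemma one_div_sqrt_two_ne_zero : ((1 / Real.sqrt 2 : ℝ) : ℂ) ≠ 0 := by
  have : (0:ℝ) < 1 / Real.sqrt 2 := by positivity
  exact_mod_cast this.ne'

lemma ghzSign_not_product (m : ℕ) (c : ℂ) (hc : c ≠ 0) (S : Finset (Fin (m + 2)))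
    (hS : S ≠ ∅) (hS' : S ≠ univ) :
    ¬ ∃ (u : ({ i // i ∈ S } → Fin 2) → ℂ) (v : ({ i // i ∉ S } → Fin 2) → ℂ),
      ∀ a : Fin (m + 2) → Fin 2,
        ghzSign (m + 2) c a = u (fun i => a i.1) * v (fun i => a i.1) := by
  rintro ⟨u, v, hf⟩
  have h0 := hf (fun _ => 0)
  have h1 := hf (fun _ => 1)
  have hval0 : ghzSign (m + 2) c (fun _ => 0) = ((1 / Real.sqrt 2 : ℝ) : ℂ) := by
    simp [ghzSign]
  have hval1 : ghzSign (m + 2) c (fun _ => 1) = c * ((1 / Real.sqrt 2 : ℝ) : ℂ) := by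
    have hne : ¬ ∀ i : Fin (m + 2), (1 : Fin 2) = 0 := fun H => absurd (H 0) (by decide)
    simp [ghzSign, hne]
  rw [hval0] at h0
  rw [hval1] at h1
  have h1' : c * ((1 / Real.sqrt 2 : ℝ) : ℂ)
      = u (fun _ => 1) * v (fun _ => 1) := h1
  have h0' : ((1 / Real.sqrt 2 : ℝ) : ℂ)
      = u (fun _ => 0) * v (fun _ => 0) := h0
  have hu1 : u (fun _ => 1) ≠ 0 := fun H => by
    rw [H, zero_mul] at h1'
    exact mul_ne_zero hc one_div_sqrt_two_ne_zero h1'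
  have hv0 : v (fun _ => 0) ≠ 0 := fun H => by
    rw [H, mul_zero] at h0'
    exact one_div_sqrt_two_ne_zero h0'
  obtain ⟨iS, hiS⟩ := Finset.nonempty_iff_ne_empty.mpr hS
  obtain ⟨jS, hjS⟩ : ∃ j, j ∉ S := by
    by_contra H
    push_neg at H
    exact hS' (Finset.eq_univ_iff_forall.mpr H)
  set aS : Fin (m + 2) → Fin 2 := fun i => if i ∈ S then 1 else 0 with haS
  have hmix := hf aS
  have hzero : ghzSign (m + 2) c aS = 0 := by
    have hn0 : ¬ ∀ i, aS i = 0 := fun H => by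
      have := H iS; simp [haS, hiS] at this
    have hn1 : ¬ ∀ i, aS i = 1 := fun H => by
      have := H jS; simp [haS, hjS] at this
    simp [ghzSign, hn0, hn1]
  have hul : (fun i : {i // i ∈ S} => aS i.1) = fun _ => 1 := by
    funext i; simp [haS, i.2]
  have hvl : (fun i : {i // i ∉ S} => aS i.1) = fun _ => 0 := by
    funext i; simp [haS, i.2]
  rw [hzero, hul, hvl] at hmix
  exact mul_ne_zero hu1 hv0 hmix.symm

/-- If a cheating non-participant skips their X-measurement and announces a random bit r,
then after the honest non-participants measure and Alice applies her Z-correction based on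
the announced parity, the resulting (unnormalised) state on the m+2 unmeasured qubits is,
up to a possibly wrong sign known only through the cheater's withheld outcome, a GHZ-type
state (|0⟩^⊗(m+2) + (−1)^c |1⟩^⊗(m+2))/√2 — which is entangled (non-product) across every
nontrivial bipartition, so the cheater remains entangled with the participants. -/
theorem cheater_stays_entangled (m h : ℕ)
    (e : Fin (m + 2 + h) ≃ (Fin (m + 2) ⊕ Fin h))
    (x : Fin h → Fin 2) (r : Fin 2) (alice : Fin (m + 2)) :
    ∃ c : ℂ, (c = 1 ∨ c = -1) ∧
      (if ((∑ i, (x i).val) + r.val) % 2 = 1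
          then applyGate Zmat alice (postCheat m h e x)
          else postCheat m h e x)
        = ((1 / Real.sqrt (2 ^ h) : ℝ) : ℂ) • ghzSign (m + 2) c ∧
      ∀ S : Finset (Fin (m + 2)), S ≠ ∅ → S ≠ univ →
        ¬ ∃ (u : ({ i // i ∈ S } → Fin 2) → ℂ) (v : ({ i // i ∉ S } → Fin 2) → ℂ),
          ∀ a : Fin (m + 2) → Fin 2,
            ghzSign (m + 2) c a = u (fun i => a i.1) * v (fun i => a i.1) := by
  have hsign : ((-1 : ℂ) ^ (∑ i, (x i).val) = 1 ∨ (-1 : ℂ) ^ (∑ i, (x i).val) = -1) := by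
    rcases Nat.even_or_odd (∑ i, (x i).val) with he | ho
    · exact Or.inl he.neg_one_pow
    · exact Or.inr ho.neg_one_pow
  by_cases hpar : ((∑ i, (x i).val) + r.val) % 2 = 1
  · refine ⟨-((-1) ^ (∑ i, (x i).val)), ?_, ?_, ?_⟩
    · rcases hsign with hs | hs <;> rw [hs] <;> simp
    · rw [if_pos hpar, postCheat_eq, applyZ_ghzSign]
    · intro S h1 h2
      apply ghzSign_not_product
      · rcases hsign with hs | hs <;> rw [hs] <;> norm_num
      · exact h1
      · exact h2
  · refine ⟨(-1) ^ (∑ i, (x i).val), hsign, ?_, ?_⟩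
    · rw [if_neg hpar, postCheat_eq]
    · intro S h1 h2
      apply ghzSign_not_product
      · rcases hsign with hs | hs <;> rw [hs] <;> norm_num
      · exact h1
      · exact h2
end
end
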